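/- Let X and Y be real locally convex topological vector spaces, let T : X → Y be a continuous linear mapping, and let Ω ⊂ X be a quasi-nearly convex set. Then: (a) T(qri(Ω)) ⊂ qri(T(Ω)); (b) if qri(Ω) ≠ ∅, T is injective, and T(Ω) is quasi-regular (i.e., qri(T(Ω)) = iri(T(Ω))), then T(qri(Ω)) = qri(T(Ω)); (c) both T(Ω) and T(qri(Ω)) are quasi-nearly convex subsets of Y. -/

import Mathlib

open Pointwise Set

/-- Conic hull: `cone(A) = {λa : λ ≥ 0, a ∈ A}`. -/
def coneHull {Z : Type*} [AddCommGroup Z] [Module ℝ Z] (A : Set Z) : Set Z :=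
  {y | ∃ c : ℝ, 0 ≤ c ∧ ∃ a ∈ A, y = c • a}

/-- A set is a linear subspace if it underlies some `ℝ`-submodule. -/
def IsLinearSubspace {Z : Type*} [AddCommGroup Z] [Module ℝ Z] (S : Set Z) : Prop :=
  ∃ L : Submodule ℝ Z, (L : Set Z) = S

/-- Intrinsic relative interior. -/
def iri {Z : Type*} [AddCommGroup Z] [Module ℝ Z] (A : Set Z) : Set Z :=
  {x ∈ A | IsLinearSubspace (coneHull (A - {x}))}

/-- Quasi-relative interior. -/
def qri {Z : Type*} [AddCommGroup Z] [Module ℝ Z] [TopologicalSpace Z] (A : Set Z) : Set Z :=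
  {x ∈ A | IsLinearSubspace (closure (coneHull (A - {x})))}

/-- A set is quasi-nearly convex if it is squeezed between a convex set with
nonempty quasi-relative interior and its closure. -/
def QuasiNearlyConvex {Z : Type*} [AddCommGroup Z] [Module ℝ Z] [TopologicalSpace Z]
    (A : Set Z) : Prop :=
  ∃ C : Set Z, Convex ℝ C ∧ (qri C).Nonempty ∧ C ⊆ A ∧ A ⊆ closure C

/-!
The closure of the image of a subspace under a continuous linear map is a subspace, and `T`
maps `cone (Ω - x)` onto `cone (T Ω - T x)`; this gives (a) for any set. If `T` is injective,
a cone whose image is a subspace is itself one, so `iri (T Ω) ⊆ T (iri Ω) ⊆ T (qri Ω)`,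
which is (b).
For (c): sandwiching `C ⊆ A ⊆ cl C` does not change the closed cone of `A - x`, so points of
`qri C` lie in `qri A`. For convex `C`, moving from a point of `qri C` towards any point of `C`
stays in `qri C`; hence `qri C` is convex and dense in `C`, and it witnesses that `qri Ω` is
quasi-nearly convex. Continuous linear images of witnesses are witnesses.
-/

namespace IsLinearSubspace

variable {Z W : Type*} [AddCommGroup Z] [Module ℝ Z] [AddCommGroup W] [Module ℝ W]

lemma image {S : Set Z} (h : IsLinearSubspace S) (f : Z →ₗ[ℝ] W) :
    IsLinearSubspace (f '' S) := by
  obtain ⟨L, rfl⟩ := h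
  exact ⟨L.map f, rfl⟩

lemma preimage {S : Set W} (h : IsLinearSubspace S) (f : Z →ₗ[ℝ] W) :
    IsLinearSubspace (f ⁻¹' S) := by
  obtain ⟨L, rfl⟩ := h
  exact ⟨L.comap f, rfl⟩

lemma closure [TopologicalSpace Z] [ContinuousAdd Z] [ContinuousConstSMul ℝ Z] {S : Set Z}
    (h : IsLinearSubspace S) : IsLinearSubspace (_root_.closure S) := by
  obtain ⟨L, rfl⟩ := h
  exact ⟨L.topologicalClosure, rfl⟩

end IsLinearSubspace

section ConeHull

variable {Z W : Type*} [AddCommGroup Z] [Module ℝ Z] [AddCommGroup W] [Module ℝ W]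

lemma subset_coneHull (A : Set Z) : A ⊆ coneHull A :=
  fun a ha => ⟨1, zero_le_one, a, ha, (one_smul ℝ a).symm⟩

lemma coneHull_mono {A B : Set Z} (h : A ⊆ B) : coneHull A ⊆ coneHull B := by
  rintro _ ⟨c, hc, a, ha, rfl⟩
  exact ⟨c, hc, a, h ha, rfl⟩

lemma coneHull_subset_coneHull_of_subset {A B : Set Z} (h : A ⊆ coneHull B) :
    coneHull A ⊆ coneHull B := by
  rintro _ ⟨c, hc, a, ha, rfl⟩
  obtain ⟨d, hd, b, hb, rfl⟩ := h ha
  exact ⟨c * d, mul_nonneg hc hd, b, hb, (mul_smul c d b).symm⟩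

lemma coneHull_subset_submodule {A : Set Z} {L : Submodule ℝ Z} (h : A ⊆ L) :
    coneHull A ⊆ L := by
  rintro _ ⟨c, _, a, ha, rfl⟩
  exact L.smul_mem c (h ha)

variable {F : Type*} [FunLike F Z W] [LinearMapClass F ℝ Z W]

lemma coneHull_image (f : F) (A : Set Z) : coneHull (f '' A) = f '' coneHull A := by
  ext y
  constructor
  · rintro ⟨c, hc, _, ⟨a, ha, rfl⟩, rfl⟩
    exact ⟨c • a, ⟨c, hc, a, ha, rfl⟩, map_smul f c a⟩
  · rintro ⟨_, ⟨c, hc, a, ha, rfl⟩, rfl⟩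
    exact ⟨c, hc, f a, ⟨a, ha, rfl⟩, map_smul f c a⟩

lemma coneHull_image_sub_singleton (f : F) (A : Set Z) (x : Z) :
    coneHull (f '' A - {f x}) = f '' coneHull (A - {x}) := by
  rw [← Set.image_singleton, ← Set.image_sub, coneHull_image]

variable [TopologicalSpace Z] [ContinuousConstSMul ℝ Z]

lemma coneHull_closure_subset (A : Set Z) : coneHull (closure A) ⊆ closure (coneHull A) := by
  rintro _ ⟨c, hc, a, ha, rfl⟩
  refine closure_mono ?_ (smul_closure_subset c A (Set.smul_mem_smul_set ha))
  rintro _ ⟨b, hb, rfl⟩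
  exact ⟨c, hc, b, hb, rfl⟩

lemma closure_coneHull_sub_singleton_eq [ContinuousSub Z] {S A : Set Z} (hSA : S ⊆ A)
    (hAS : A ⊆ closure S) (x : Z) :
    closure (coneHull (A - {x})) = closure (coneHull (S - {x})) := by
  refine (closure_mono (coneHull_mono (Set.sub_subset_sub_right hSA))).antisymm' ?_
  have hA : A - {x} ⊆ closure (S - {x}) := by
    rw [Set.sub_singleton, Set.sub_singleton]
    exact (Set.image_mono hAS).trans (image_closure_subset_closure_image (continuous_sub_right x))
  exact closure_minimal ((coneHull_mono hA).trans (coneHull_closure_subset _)) isClosed_closure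

end ConeHull

section QuasiRelativeInterior

variable {Z W : Type*} [AddCommGroup Z] [Module ℝ Z] [AddCommGroup W] [Module ℝ W]

lemma iri_image_subset_of_injective (f : Z →ₗ[ℝ] W) (hf : Function.Injective f)
    (A : Set Z) : iri (f '' A) ⊆ f '' iri A := by
  rintro _ ⟨⟨x, hxA, rfl⟩, hL⟩
  refine ⟨x, ⟨hxA, ?_⟩, rfl⟩
  rw [coneHull_image_sub_singleton] at hL
  simpa only [Set.preimage_image_eq _ hf] using hL.preimage f

variable [TopologicalSpace Z] [TopologicalSpace W]

lemma qri_subset (A : Set Z) : qri A ⊆ A := fun _ hx => hx.1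

lemma iri_subset_qri [ContinuousAdd Z] [ContinuousConstSMul ℝ Z] (A : Set Z) :
    iri A ⊆ qri A :=
  fun _ hx => ⟨hx.1, hx.2.closure⟩

lemma qri_eq_inter_qri_of_subset_closure [ContinuousSub Z] [ContinuousConstSMul ℝ Z]
    {S A : Set Z} (hSA : S ⊆ A) (hAS : A ⊆ closure S) : qri S = S ∩ qri A := by
  ext x
  simp only [qri, Set.mem_ofPred_eq, Set.mem_inter_iff,
    closure_coneHull_sub_singleton_eq hSA hAS x]
  exact ⟨fun h => ⟨h.1, hSA h.1, h.2⟩, fun h => ⟨h.1, h.2.2⟩⟩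

lemma image_qri_subset [ContinuousAdd W] [ContinuousConstSMul ℝ W] (f : Z →L[ℝ] W)
    (A : Set Z) : f '' qri A ⊆ qri (f '' A) := by
  rintro _ ⟨x, ⟨hxA, hL⟩, rfl⟩
  refine ⟨Set.mem_image_of_mem f hxA, ?_⟩
  rw [coneHull_image_sub_singleton f, ← closure_image_closure f.continuous]
  exact (hL.image (f : Z →ₗ[ℝ] W)).closure

/-- With `z = a • x + b • y`, `a • (C - x) ⊆ C - z` and `C - z` lies in the closed subspace
generated by `C - x`, so `C - x` and `C - z` generate the same closed cone. -/
lemma Convex.combo_qri_self_mem_qri {C : Set Z} (hC : Convex ℝ C) {x y : Z}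
    (hx : x ∈ qri C) (hy : y ∈ C) {a b : ℝ} (ha : 0 < a) (hb : 0 ≤ b) (hab : a + b = 1) :
    a • x + b • y ∈ qri C := by
  obtain ⟨hxC, L, hL⟩ := hx
  set z := a • x + b • y with hz
  have hCx : C - {x} ⊆ L := fun u hu => hL ▸ subset_closure (subset_coneHull _ hu)
  have hyx : y - x ∈ L := hCx (Set.sub_mem_sub hy rfl)
  refine ⟨hC hxC hy ha.le hb hab, L, subset_antisymm ?_ ?_⟩
  · rw [hL]
    refine closure_mono (coneHull_subset_coneHull_of_subset ?_)
    rintro _ ⟨c, hc, _, rfl, rfl⟩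
    refine ⟨a⁻¹, inv_nonneg.2 ha.le, (a • c + b • y) - z,
      Set.sub_mem_sub (hC hc hy ha.le hb hab) rfl, ?_⟩
    rw [hz, add_sub_add_right_eq_sub, ← smul_sub, smul_smul, inv_mul_cancel₀ ha.ne', one_smul]
  · refine closure_minimal (coneHull_subset_submodule ?_) (hL ▸ isClosed_closure)
    rintro _ ⟨c, hc, _, rfl, rfl⟩
    have hcx : c - x ∈ L := hCx (Set.sub_mem_sub hc rfl)
    have hcz : c - z = a • (c - x) + b • ((c - x) - (y - x)) := by
      linear_combination (norm := module) -(hab • c)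
    change c - z ∈ L
    rw [hcz]
    exact L.add_mem (L.smul_mem _ hcx) (L.smul_mem _ (L.sub_mem hcx hyx))

lemma Convex.subset_closure_qri [ContinuousAdd Z] [ContinuousSMul ℝ Z] {C : Set Z}
    (hC : Convex ℝ C) (hne : (qri C).Nonempty) : C ⊆ closure (qri C) := by
  obtain ⟨x, hx⟩ := hne
  intro y hy
  have hopen : openSegment ℝ x y ⊆ qri C := by
    rintro _ ⟨a, b, ha, hb, hab, rfl⟩
    exact hC.combo_qri_self_mem_qri hx hy ha hb.le hab
  exact closure_mono hopen (segment_subset_closure_openSegment (right_mem_segment ℝ x y))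

lemma Convex.qri_qri [IsTopologicalAddGroup Z] [ContinuousSMul ℝ Z] {C : Set Z}
    (hC : Convex ℝ C) : qri (qri C) = qri C := by
  rcases (qri C).eq_empty_or_nonempty with hempty | hne
  · rw [hempty]
    exact Set.eq_empty_of_subset_empty (qri_subset ∅)
  · rw [qri_eq_inter_qri_of_subset_closure (qri_subset C) (hC.subset_closure_qri hne),
      Set.inter_self]

lemma Convex.qri {C : Set Z} (hC : Convex ℝ C) : Convex ℝ (qri C) := by
  intro x hx y hy a b ha hb hab
  rcases ha.eq_or_lt with rfl | ha
  · rw [zero_add] at hab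
    simpa [hab] using hy
  · exact hC.combo_qri_self_mem_qri hx hy.1 ha hb hab

end QuasiRelativeInterior

namespace QuasiNearlyConvex

variable {Z W : Type*} [AddCommGroup Z] [Module ℝ Z] [TopologicalSpace Z]
  [AddCommGroup W] [Module ℝ W] [TopologicalSpace W]

lemma image [ContinuousAdd W] [ContinuousConstSMul ℝ W] {A : Set Z} (hA : QuasiNearlyConvex A)
    (f : Z →L[ℝ] W) : QuasiNearlyConvex (f '' A) := by
  obtain ⟨C, hC, hqC, hCA, hAC⟩ := hA
  refine ⟨f '' C, hC.linear_image (f : Z →ₗ[ℝ] W),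
    (hqC.image f).mono (image_qri_subset f C), Set.image_mono hCA, ?_⟩
  exact (Set.image_mono hAC).trans (image_closure_subset_closure_image f.continuous)

lemma qri [IsTopologicalAddGroup Z] [ContinuousSMul ℝ Z] {A : Set Z}
    (hA : QuasiNearlyConvex A) : QuasiNearlyConvex (qri A) := by
  obtain ⟨C, hC, hqC, hCA, hAC⟩ := hA
  have hCq : C ⊆ closure (_root_.qri C) := hC.subset_closure_qri hqC
  refine ⟨_root_.qri C, hC.qri, by rwa [hC.qri_qri], ?_, ?_⟩
  · rw [qri_eq_inter_qri_of_subset_closure hCA hAC]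
    exact Set.inter_subset_right
  · exact (qri_subset A).trans (hAC.trans (closure_minimal hCq isClosed_closure))

end QuasiNearlyConvex

theorem stmt18_general {X Y : Type*}
    [AddCommGroup X] [Module ℝ X] [TopologicalSpace X]
    [IsTopologicalAddGroup X] [ContinuousSMul ℝ X]
    [AddCommGroup Y] [Module ℝ Y] [TopologicalSpace Y]
    [IsTopologicalAddGroup Y] [ContinuousSMul ℝ Y]
    (T : X →L[ℝ] Y) (Ω : Set X) (h : QuasiNearlyConvex Ω) :
    (T '' qri Ω ⊆ qri (T '' Ω)) ∧
    ((qri Ω).Nonempty → Function.Injective (T : X → Y) → qri (T '' Ω) = iri (T '' Ω) →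
      T '' qri Ω = qri (T '' Ω)) ∧
    (QuasiNearlyConvex (T '' Ω) ∧ QuasiNearlyConvex (T '' qri Ω)) := by
  refine ⟨image_qri_subset T Ω, fun _ hinj hreg => ?_, h.image T, h.qri.image T⟩
  refine (image_qri_subset T Ω).antisymm ?_
  calc qri (T '' Ω) = iri (T '' Ω) := hreg
    _ ⊆ T '' iri Ω := iri_image_subset_of_injective (T : X →ₗ[ℝ] Y) hinj Ω
    _ ⊆ T '' qri Ω := Set.image_mono (iri_subset_qri Ω)

theorem stmt18 {X Y : Type*}
    [AddCommGroup X] [Module ℝ X] [TopologicalSpace X]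
    [IsTopologicalAddGroup X] [ContinuousSMul ℝ X] [LocallyConvexSpace ℝ X]
    [AddCommGroup Y] [Module ℝ Y] [TopologicalSpace Y]
    [IsTopologicalAddGroup Y] [ContinuousSMul ℝ Y] [LocallyConvexSpace ℝ Y]
    (T : X →L[ℝ] Y) (Ω : Set X) (h : QuasiNearlyConvex Ω) :
    (T '' qri Ω ⊆ qri (T '' Ω)) ∧
    ((qri Ω).Nonempty → Function.Injective (T : X → Y) → qri (T '' Ω) = iri (T '' Ω) →
      T '' qri Ω = qri (T '' Ω)) ∧
    (QuasiNearlyConvex (T '' Ω) ∧ QuasiNearlyConvex (T '' qri Ω)) :=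
  stmt18_general T Ω h
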